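/- Fix an integer d ≥ 0. Define p₊ = x₂^d and p₋ = ∑_{b=0}^{d} C(d,b)_{q²} · ( q^{2b(d−b−1)} / [2b+1]_q!! ) · x₁^{d−b} x₂^{b} y^{2b+1}, where [2b+1]_q!! = [1]_q[3]_q⋯[2b+1]_q. Then the intersection of ker F with the eigenspace of K_Δ in P(𝕊)^d for the eigenvalue q^{1−2d} is the one-dimensional span of p₊, the intersection of ker F with the eigenspace of K_Δ in P(𝕊)^d for the eigenvalue q^{3+2d} is the one-dimensional span of p₋, and furthermore F_Δ(p₊) = 0 and F_Δ(p₋) = 0. -/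

import Mathlib

noncomputable section

open MvPolynomial

/-- The quantum integer `[n]_q = (q^n - q^{-n})/(q - q^{-1})`. -/
def qint (q : ℂ) (n : ℤ) : ℂ := (q ^ n - q ^ (-n)) / (q - q⁻¹)

/-- Build a linear operator on `ℂ[x₁,…,x_N]` from its values on the monomial basis. -/
def mkOp {N : ℕ} (f : (Fin N →₀ ℕ) → MvPolynomial (Fin N) ℂ) :
    Module.End ℂ (MvPolynomial (Fin N) ℂ) :=
  (MvPolynomial.basisMonomials (Fin N) ℂ).constr ℂ fun α => f α

/-- `μ_j`: multiplication by `x_j`. -/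
def mu {N : ℕ} (j : Fin N) : Module.End ℂ (MvPolynomial (Fin N) ℂ) :=
  mkOp fun α => monomial (α + Finsupp.single j 1) 1

/-- `γ_j^e` (e ∈ ℤ): multiply the monomial `x^α` by `q^{e·α_j}`. -/
def gam {N : ℕ} (q : ℂ) (j : Fin N) (e : ℤ) : Module.End ℂ (MvPolynomial (Fin N) ℂ) :=
  mkOp fun α => q ^ (e * (α j : ℤ)) • monomial α 1

/-- The `p`-shifted partial `q`-derivative in direction `j`:
`x^α ↦ [α_j]_p · x^{α - ε_j}` (zero when `α_j = 0`, since `[0]_p = 0`). -/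
def del {N : ℕ} (p : ℂ) (j : Fin N) : Module.End ℂ (MvPolynomial (Fin N) ℂ) :=
  mkOp fun α => qint p (α j) • monomial (α - Finsupp.single j 1) 1

/-- `P(𝕊) = ℂ[x₁,x₂,y]`, with variables indexed `0 ↦ x₁`, `1 ↦ x₂`, `2 ↦ y`. -/
abbrev PS3 := MvPolynomial (Fin 3) ℂ

/-- `K_Δ = q·γ₁²γ₂^{-2}ω²`. -/
def KDel (q : ℂ) : Module.End ℂ PS3 := q • (gam q 0 2 * gam q 1 (-2) * gam q 2 2)

/-- `K_Δ^{-1} = q^{-1}·γ₁^{-2}γ₂²ω^{-2}`. -/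
def KDel' (q : ℂ) : Module.End ℂ PS3 := q⁻¹ • (gam q 0 (-2) * gam q 1 2 * gam q 2 (-2))

/-- `E_Δ = q·ω²μ₁∂_{2,q²} + ν²/[2]_q`. -/
def EDel (q : ℂ) : Module.End ℂ PS3 :=
  q • (gam q 2 2 * mu 0 * del (q ^ 2) 1) + (qint q 2)⁻¹ • (mu 2 * mu 2)

/-- `F_Δ = μ₂∂_{1,q²} − (1/[2]_q)·γ₁^{-2}γ₂²∇²`. -/
def FDel (q : ℂ) : Module.End ℂ PS3 :=
  mu 1 * del (q ^ 2) 0 - (qint q 2)⁻¹ • (gam q 0 (-2) * gam q 1 2 * (del q 2 * del q 2))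

/-- `K = q²·γ₁²γ₂²`. -/
def Kop (q : ℂ) : Module.End ℂ PS3 := (q ^ 2 : ℂ) • (gam q 0 2 * gam q 1 2)

/-- `K^{-1} = q^{-2}·γ₁^{-2}γ₂^{-2}`. -/
def Kop' (q : ℂ) : Module.End ℂ PS3 := (q ^ (-2 : ℤ)) • (gam q 0 (-2) * gam q 1 (-2))

/-- `E = [2]_q·(q²·γ₂²ωμ₁∇ + μ₂ν)`. -/
def Eop (q : ℂ) : Module.End ℂ PS3 :=
  qint q 2 • ((q ^ 2 : ℂ) • (gam q 1 2 * gam q 2 1 * mu 0 * del q 2) + mu 1 * mu 2)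

/-- `F = ∂_{1,q²}ν − γ₁^{-2}ω∂_{2,q²}∇`, the quantum symplectic Dirac operator. -/
def Fop (q : ℂ) : Module.End ℂ PS3 :=
  del (q ^ 2) 0 * mu 2 - gam q 0 (-2) * gam q 2 1 * (del (q ^ 2) 1 * del q 2)

/-- `P(𝕊)^d`: the span of the monomials `x₁^a x₂^b y^c` with `a + b = d`. -/
def PSd (d : ℕ) : Submodule ℂ PS3 :=
  Submodule.span ℂ {p | ∃ α : Fin 3 →₀ ℕ, α 0 + α 1 = d ∧ p = monomial α (1 : ℂ)}

/-- `M^d = ker F ⊓ P(𝕊)^d`: the degree-`d` symplectic monogenics. -/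
def Mono (q : ℂ) (d : ℕ) : Submodule ℂ PS3 := LinearMap.ker (Fop q) ⊓ PSd d

/-- The quantum factorial `[n]_q!`. -/
def qfact (q : ℂ) (n : ℕ) : ℂ := ∏ m ∈ Finset.range n, qint q (m + 1)

/-- The quantum binomial coefficient `C(n,m)_q`. -/
def qbinom (q : ℂ) (n m : ℕ) : ℂ := qfact q n / (qfact q m * qfact q (n - m))

/-- The odd quantum double factorial `[2b+1]_q!! = [1]_q[3]_q⋯[2b+1]_q`. -/
def qoddfact (q : ℂ) (b : ℕ) : ℂ := ∏ i ∈ Finset.range (b + 1), qint q (2 * i + 1)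

/-- `p₊ = x₂^d`. -/
def pPlus (d : ℕ) : PS3 := monomial (Finsupp.single 1 d) (1 : ℂ)

/-- `p₋ = ∑_b C(d,b)_{q²}·(q^{2b(d-b-1)}/[2b+1]_q!!)·x₁^{d-b}x₂^b y^{2b+1}`. -/
def pMinus (q : ℂ) (d : ℕ) : PS3 :=
  ∑ b ∈ Finset.range (d + 1),
    (qbinom (q ^ 2) d b * q ^ (2 * (b : ℤ) * ((d : ℤ) - (b : ℤ) - 1)) / qoddfact q b) •
      monomial (Finsupp.single 0 (d - b) + Finsupp.single 1 b
        + Finsupp.single 2 (2 * b + 1)) (1 : ℂ)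

/-! ### Auxiliary infrastructure -/

lemma mkOp_apply {N : ℕ} (f : (Fin N →₀ ℕ) → MvPolynomial (Fin N) ℂ) (α : Fin N →₀ ℕ) :
    mkOp f (monomial α 1) = f α := by
  have := Module.Basis.constr_basis (MvPolynomial.basisMonomials (Fin N) ℂ) ℂ f α
  rwa [coe_basisMonomials] at this

lemma smul_mono {N : ℕ} (α : Fin N →₀ ℕ) (c : ℂ) :
    (monomial α c : MvPolynomial (Fin N) ℂ) = c • monomial α 1 := by
  rw [smul_monomial, smul_eq_mul, mul_one]

lemma mu_apply {N : ℕ} (j : Fin N) (α : Fin N →₀ ℕ) (c : ℂ) :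
    mu j (monomial α c) = monomial (α + Finsupp.single j 1) c := by
  rw [smul_mono, map_smul, mu, mkOp_apply, ← smul_mono]

lemma gam_apply {N : ℕ} (q : ℂ) (j : Fin N) (e : ℤ) (α : Fin N →₀ ℕ) (c : ℂ) :
    gam q j e (monomial α c) = q ^ (e * (α j : ℤ)) • monomial α c := by
  rw [smul_mono, map_smul, gam, mkOp_apply, smul_comm, ← smul_mono]

lemma del_apply {N : ℕ} (p : ℂ) (j : Fin N) (α : Fin N →₀ ℕ) (c : ℂ) :
    del p j (monomial α c) = qint p (α j) • monomial (α - Finsupp.single j 1) c := by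
  rw [smul_mono, map_smul, del, mkOp_apply, smul_comm, ← smul_mono]

/-- The exponent triple `x₁^x x₂^y y^z`. -/
def tri (x y z : ℕ) : Fin 3 →₀ ℕ :=
  Finsupp.single 0 x + Finsupp.single 1 y + Finsupp.single 2 z

lemma tri0 (x y z : ℕ) : tri x y z 0 = x := by simp [tri, Finsupp.single_apply]
lemma tri1 (x y z : ℕ) : tri x y z 1 = y := by simp [tri, Finsupp.single_apply]
lemma tri2 (x y z : ℕ) : tri x y z 2 = z := by simp [tri, Finsupp.single_apply]

lemma tri_add0 (x y z : ℕ) : tri x y z + Finsupp.single 0 1 = tri (x+1) y z := by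
  ext i; fin_cases i <;> simp [tri, Finsupp.single_apply]
lemma tri_add1 (x y z : ℕ) : tri x y z + Finsupp.single 1 1 = tri x (y+1) z := by
  ext i; fin_cases i <;> simp [tri, Finsupp.single_apply]
lemma tri_add2 (x y z : ℕ) : tri x y z + Finsupp.single 2 1 = tri x y (z+1) := by
  ext i; fin_cases i <;> simp [tri, Finsupp.single_apply]
lemma tri_sub0 (x y z : ℕ) : tri x y z - Finsupp.single 0 1 = tri (x-1) y z := by
  ext i; fin_cases i <;> simp [tri, Finsupp.single_apply, Finsupp.tsub_apply]
lemma tri_sub1 (x y z : ℕ) : tri x y z - Finsupp.single 1 1 = tri x (y-1) z := by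
  ext i; fin_cases i <;> simp [tri, Finsupp.single_apply, Finsupp.tsub_apply]
lemma tri_sub2 (x y z : ℕ) : tri x y z - Finsupp.single 2 1 = tri x y (z-1) := by
  ext i; fin_cases i <;> simp [tri, Finsupp.single_apply, Finsupp.tsub_apply]

lemma tri_inj {x y z x' y' z' : ℕ} (h : tri x y z = tri x' y' z') :
    x = x' ∧ y = y' ∧ z = z' := by
  refine ⟨?_, ?_, ?_⟩
  · have := congrArg (fun f => f 0) h; simpa [tri0] using this
  · have := congrArg (fun f => f 1) h; simpa [tri1] using this
  · have := congrArg (fun f => f 2) h; simpa [tri2] using this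

lemma eq_tri (α : Fin 3 →₀ ℕ) : α = tri (α 0) (α 1) (α 2) := by
  ext i; fin_cases i <;> simp [tri, Finsupp.single_apply]

lemma Fop_tri (q : ℂ) (x y z : ℕ) :
    Fop q (monomial (tri x y z) 1) =
      qint (q^2) x • monomial (tri (x-1) y (z+1)) (1:ℂ)
      - (qint q z * qint (q^2) y * q ^ ((1:ℤ) * ((z-1:ℕ):ℤ)) * q ^ ((-2:ℤ) * (x:ℤ))) •
          monomial (tri x (y-1) (z-1)) (1:ℂ) := by
  rw [Fop, LinearMap.sub_apply, Module.End.mul_apply, mu_apply, tri_add2, del_apply, tri0, tri_sub0,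
    Module.End.mul_apply, Module.End.mul_apply, Module.End.mul_apply, del_apply, tri2, tri_sub2,
    map_smul, del_apply, tri1, tri_sub1, map_smul, map_smul, map_smul, gam_apply, tri2,
    map_smul, map_smul, gam_apply, tri0, smul_smul, smul_smul, smul_smul]

lemma KDel_tri (q : ℂ) (hq : q ≠ 0) (x y z : ℕ) :
    KDel q (monomial (tri x y z) 1) =
      (q ^ (1 + 2*(x:ℤ) - 2*(y:ℤ) + 2*(z:ℤ))) • monomial (tri x y z) (1:ℂ) := by
  rw [KDel, LinearMap.smul_apply, Module.End.mul_apply, Module.End.mul_apply, gam_apply, tri2,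
    map_smul, gam_apply, tri1, map_smul, map_smul, gam_apply, tri0, smul_smul, smul_smul,
    smul_smul]
  congr 1
  rw [show (1 + 2*(x:ℤ) - 2*(y:ℤ) + 2*(z:ℤ)) = 1 + 2*(z:ℤ) + (-2) * (y:ℤ) + 2*(x:ℤ) by ring,
    zpow_add₀ hq, zpow_add₀ hq, zpow_add₀ hq, zpow_one]

lemma FDel_tri (q : ℂ) (x y z : ℕ) :
    FDel q (monomial (tri x y z) 1) =
      qint (q^2) x • monomial (tri (x-1) (y+1) z) (1:ℂ)
      - ((qint q 2)⁻¹ * qint q z * qint q ((z-1:ℕ)) * q ^ ((2:ℤ) * (y:ℤ)) * q ^ ((-2:ℤ) * (x:ℤ))) •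
          monomial (tri x y (z-1-1)) (1:ℂ) := by
  rw [FDel, LinearMap.sub_apply, Module.End.mul_apply, del_apply, tri0, tri_sub0, map_smul,
    mu_apply, tri_add1, LinearMap.smul_apply, Module.End.mul_apply, Module.End.mul_apply,
    Module.End.mul_apply, del_apply, tri2, tri_sub2, map_smul, del_apply, tri2, tri_sub2,
    map_smul, map_smul, map_smul, gam_apply, tri1, map_smul, map_smul, gam_apply, tri0,
    smul_smul, smul_smul, smul_smul, smul_smul]

section Scalars
set_option linter.unusedSectionVars false
variable {q : ℂ} (hq : q ≠ 0) (hroot : ∀ n : ℕ, 0 < n → q ^ n ≠ 1)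

include hq hroot in
lemma qzpow_eq_one {k : ℤ} (h : q ^ k = 1) : k = 0 := by
  by_contra hk
  rcases lt_or_gt_of_ne hk with hneg | hpos
  · have h' : q ^ (-k) = 1 := by rw [zpow_neg, h, inv_one]
    have : q ^ ((-k).toNat) = 1 := by
      rw [← zpow_natCast, Int.toNat_of_nonneg (by omega)]; exact h'
    exact hroot (-k).toNat (by omega) this
  · have : q ^ (k.toNat) = 1 := by
      rw [← zpow_natCast, Int.toNat_of_nonneg (by omega)]; exact h
    exact hroot k.toNat (by omega) this

include hq hroot in
lemma qzpow_inj {m n : ℤ} (h : q ^ m = q ^ n) : m = n := by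
  have hk : q ^ (m - n) = 1 := by
    rw [zpow_sub₀ hq, h, div_self (zpow_ne_zero _ hq)]
  have := qzpow_eq_one hq hroot hk
  omega

include hq hroot in
lemma qsub_ne : q - q⁻¹ ≠ 0 := by
  intro h
  have hqq : q = q⁻¹ := sub_eq_zero.mp h
  have h2 : q ^ 2 = 1 := by
    rw [pow_two]; nth_rewrite 2 [hqq]; exact mul_inv_cancel₀ hq
  exact hroot 2 (by norm_num) h2

include hq hroot in
lemma qint_ne_zero {n : ℤ} (hn : n ≠ 0) : qint q n ≠ 0 := by
  rw [qint]
  apply div_ne_zero _ (qsub_ne hq hroot)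
  intro h
  have : q ^ n = q ^ (-n) := by linear_combination h
  have := qzpow_inj hq hroot this
  omega

include hq hroot in
lemma qfact_ne_zero (n : ℕ) : qfact q n ≠ 0 := by
  rw [qfact]
  apply Finset.prod_ne_zero_iff.2
  intro m _
  exact qint_ne_zero hq hroot (by omega)

include hq hroot in
lemma qoddfact_ne_zero (b : ℕ) : qoddfact q b ≠ 0 := by
  rw [qoddfact]
  apply Finset.prod_ne_zero_iff.2
  intro m _
  exact qint_ne_zero hq hroot (by omega)

lemma qfact_succ (n : ℕ) : qfact q (n + 1) = qfact q n * qint q (n + 1) := by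
  rw [qfact, qfact, Finset.prod_range_succ]

lemma qoddfact_succ (b : ℕ) : qoddfact q (b + 1) = qoddfact q b * qint q (2 * b + 3) := by
  rw [qoddfact, qoddfact, Finset.prod_range_succ,
    show (2 * ((b:ℕ)+1 : ℕ) + 1 : ℤ) = 2 * (b:ℤ) + 3 by push_cast; ring]

lemma zpow_double (k : ℤ) : ((q:ℂ) ^ 2) ^ k = q ^ (2 * k) := by
  rw [zpow_mul q 2 k, zpow_ofNat]

include hq hroot in
lemma qsub2_ne : (q ^ 2 : ℂ) - (q ^ 2)⁻¹ ≠ 0 := by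
  intro h
  have hqq : (q^2 : ℂ) = (q^2)⁻¹ := sub_eq_zero.mp h
  have h2 : (q ^ 2 : ℂ) ^ 2 = 1 := by
    rw [pow_two]; nth_rewrite 2 [hqq]; exact mul_inv_cancel₀ (pow_ne_zero _ hq)
  rw [← pow_mul] at h2
  exact hroot 4 (by norm_num) h2

include hq hroot in
lemma qint_two_mul (n : ℕ) : qint q (2 * n) = qint q 2 * qint (q ^ 2) n := by
  have hsub2 := qsub2_ne hq hroot
  have e : (q:ℂ) ^ (2:ℤ) - q ^ (-2:ℤ) = q^2 - (q^2)⁻¹ := by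
    rw [zpow_neg, zpow_ofNat]
  rw [qint, qint, qint, zpow_double, zpow_double,
    show (2 * -(n:ℤ)) = -(2 * (n:ℤ)) by ring, e, div_mul_div_comm,
    mul_comm (q - q⁻¹) (q^2 - (q^2)⁻¹),
    mul_div_mul_left _ _ hsub2]

include hq hroot in
lemma qbinom_rec (d b : ℕ) (hbd : b < d) :
    qbinom q d b * qint q ((d - b : ℕ)) = qbinom q d (b + 1) * qint q ((b + 1 : ℕ)) := by
  rw [qbinom, qbinom]
  have h1 : d - b = (d - (b + 1)) + 1 := by omega
  rw [h1, qfact_succ, qfact_succ]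
  have f1 := qfact_ne_zero hq hroot b
  have f2 := qfact_ne_zero hq hroot (d - (b+1))
  have f3 : qint q ((b:ℤ) + 1) ≠ 0 := qint_ne_zero hq hroot (by omega)
  have f4 : qint q (((d - (b+1) : ℕ) : ℤ) + 1) ≠ 0 := qint_ne_zero hq hroot (by omega)
  have hc1 : (((d - (b+1)) + 1 : ℕ) : ℤ) = ((d - (b+1) : ℕ) : ℤ) + 1 := by push_cast; ring
  have hc2 : (((b + 1) : ℕ) : ℤ) = (b:ℤ) + 1 := by push_cast; ring
  rw [hc1, hc2]
  field_simp

end Scalars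

section Supp

/-- Polynomials whose support satisfies predicate `P`. -/
def suppSub (P : (Fin 3 →₀ ℕ) → Prop) : Submodule ℂ PS3 where
  carrier := {p | ∀ α ∈ p.support, P α}
  add_mem' := by
    intro a b ha hb α hα
    rcases Finset.mem_union.mp (MvPolynomial.support_add hα) with h | h
    exacts [ha α h, hb α h]
  zero_mem' := by intro α hα; simp at hα
  smul_mem' := by
    intro c p hp α hα
    exact hp α (MvPolynomial.support_smul hα)

lemma PSd_le (d : ℕ) : PSd d ≤ suppSub (fun α => α 0 + α 1 = d) := by
  rw [PSd, Submodule.span_le]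
  rintro p ⟨α, hα, rfl⟩ β hβ
  rw [MvPolynomial.support_monomial, if_neg one_ne_zero] at hβ
  rw [Finset.mem_singleton] at hβ
  subst hβ
  exact hα

lemma coeff_KDel (q : ℂ) (hq : q ≠ 0) (p : PS3) (α : Fin 3 →₀ ℕ) :
    coeff α (KDel q p) = q ^ (1 + 2*(α 0 : ℤ) - 2*(α 1 : ℤ) + 2*(α 2 : ℤ)) * coeff α p := by
  have hmono : ∀ (β : Fin 3 →₀ ℕ) (c : ℂ),
      coeff α (KDel q (monomial β c)) =
        q ^ (1 + 2*(α 0 : ℤ) - 2*(α 1 : ℤ) + 2*(α 2 : ℤ)) * coeff α (monomial β c) := by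
    intro β c
    conv_lhs => rw [eq_tri β, smul_mono, map_smul, KDel_tri q hq]
    rw [smul_smul, coeff_smul, coeff_monomial, coeff_monomial]
    by_cases h : tri (β 0) (β 1) (β 2) = α
    · rw [if_pos h, if_pos (by rw [← eq_tri β] at h; exact h)]
      have h0 := congrArg (fun f => f 0) h
      have h1 := congrArg (fun f => f 1) h
      have h2 := congrArg (fun f => f 2) h
      simp only [tri0, tri1, tri2] at h0 h1 h2
      rw [smul_eq_mul, mul_one, h0, h1, h2]
      ring
    · rw [if_neg h, if_neg (by rw [← eq_tri β] at h; exact h)]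
      simp
  conv_lhs => rw [p.as_sum, map_sum]
  rw [MvPolynomial.coeff_sum]
  conv_rhs => rw [p.as_sum]
  rw [MvPolynomial.coeff_sum, Finset.mul_sum]
  exact Finset.sum_congr rfl fun β _ => hmono β (coeff β p)

lemma eig_weight (q : ℂ) (hq : q ≠ 0) (hroot : ∀ n : ℕ, 0 < n → q ^ n ≠ 1)
    {p : PS3} {k : ℤ} (h : KDel q p = (q ^ k) • p)
    {α : Fin 3 →₀ ℕ} (hα : α ∈ p.support) :
    1 + 2*(α 0 : ℤ) - 2*(α 1 : ℤ) + 2*(α 2 : ℤ) = k := by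
  have hc := congrArg (coeff α) h
  rw [coeff_KDel q hq, coeff_smul, smul_eq_mul] at hc
  have hne : coeff α p ≠ 0 := MvPolynomial.mem_support_iff.1 hα
  exact qzpow_inj hq hroot (mul_right_cancel₀ hne hc)

lemma single_support (p : PS3) (β : Fin 3 →₀ ℕ) (hs : ∀ α ∈ p.support, α = β) :
    p = coeff β p • monomial β 1 := by
  apply MvPolynomial.ext
  intro γ
  rw [coeff_smul, coeff_monomial, smul_eq_mul]
  by_cases hγ : γ = β
  · subst hγ; rw [if_pos rfl, mul_one]
  · rw [if_neg (fun h => hγ h.symm), mul_zero]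
    by_contra hne
    exact hγ (hs γ (MvPolynomial.mem_support_iff.2 hne))

lemma tri_decomp (p : PS3) (d : ℕ)
    (hs : ∀ α ∈ p.support, ∃ b, b ≤ d ∧ α = tri (d - b) b (2*b+1)) :
    p = ∑ b ∈ Finset.range (d+1),
      coeff (tri (d-b) b (2*b+1)) p • monomial (tri (d-b) b (2*b+1)) 1 := by
  apply MvPolynomial.ext
  intro γ
  rw [MvPolynomial.coeff_sum]
  simp only [coeff_smul, coeff_monomial, smul_eq_mul]
  by_cases hγ : γ ∈ p.support
  · obtain ⟨b, hbd, rfl⟩ := hs γ hγ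
    rw [Finset.sum_eq_single b]
    · rw [if_pos rfl, mul_one]
    · intro b' _ hb'
      rw [if_neg, mul_zero]
      intro h
      exact hb' (tri_inj h).2.1
    · intro hb
      exact absurd (Finset.mem_range.2 (by omega)) hb
  · have hc : coeff γ p = 0 := MvPolynomial.notMem_support_iff.1 hγ
    rw [hc]
    refine (Finset.sum_eq_zero ?_).symm
    intro b _
    by_cases h : tri (d-b) b (2*b+1) = γ
    · rw [if_pos h, h, hc, zero_mul]
    · rw [if_neg h, mul_zero]

end Supp

section Coeffs

/-- coefficient in first term of `F`/`F_Δ` applied to `x₁^{d-b}x₂^b y^{2b+1}`. -/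
def eC (q : ℂ) (d b : ℕ) : ℂ := qint (q^2) ((d - b : ℕ))
def fC (q : ℂ) (d b : ℕ) : ℂ :=
  qint q ((2*b+1 : ℕ)) * qint (q^2) (b : ℕ) * q ^ ((1:ℤ) * ((2*b+1-1 : ℕ) : ℤ)) *
    q ^ ((-2:ℤ) * ((d-b : ℕ) : ℤ))
def gC (q : ℂ) (d b : ℕ) : ℂ :=
  (qint q 2)⁻¹ * qint q ((2*b+1 : ℕ)) * qint q ((2*b+1-1 : ℕ)) * q ^ ((2:ℤ) * (b : ℤ)) *
    q ^ ((-2:ℤ) * ((d-b : ℕ) : ℤ))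
def lam (q : ℂ) (d b : ℕ) : ℂ :=
  qbinom (q ^ 2) d b * q ^ (2 * (b : ℤ) * ((d : ℤ) - (b : ℤ) - 1)) / qoddfact q b

lemma qint_zero (q : ℂ) : qint q 0 = 0 := by simp [qint]

lemma Fop_term (q : ℂ) (d b : ℕ) :
    Fop q (monomial (tri (d-b) b (2*b+1)) 1) =
      eC q d b • monomial (tri (d-(b+1)) b (2*b+2)) (1:ℂ)
      - fC q d b • monomial (tri (d-b) (b-1) (2*b)) (1:ℂ) :=
  Fop_tri q (d-b) b (2*b+1)

lemma FDel_term (q : ℂ) (d b : ℕ) :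
    FDel q (monomial (tri (d-b) b (2*b+1)) 1) =
      eC q d b • monomial (tri (d-(b+1)) (b+1) (2*b+1)) (1:ℂ)
      - gC q d b • monomial (tri (d-b) b (2*b-1)) (1:ℂ) :=
  FDel_tri q (d-b) b (2*b+1)

lemma Fop_sum (q : ℂ) (d : ℕ) (c : ℕ → ℂ) :
    Fop q (∑ b ∈ Finset.range (d+1), c b • monomial (tri (d-b) b (2*b+1)) 1) =
      ∑ b ∈ Finset.range d,
        (c b * eC q d b - c (b+1) * fC q d (b+1)) • monomial (tri (d-(b+1)) b (2*b+2)) 1 := by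
  rw [map_sum]
  have hterm : ∀ b ∈ Finset.range (d+1), Fop q (c b • monomial (tri (d-b) b (2*b+1)) 1) =
      (c b * eC q d b) • monomial (tri (d-(b+1)) b (2*b+2)) (1:ℂ)
      - (c b * fC q d b) • monomial (tri (d-b) (b-1) (2*b)) (1:ℂ) := by
    intro b _
    rw [map_smul, Fop_term, smul_sub, smul_smul, smul_smul]
  rw [Finset.sum_congr rfl hterm, Finset.sum_sub_distrib, Finset.sum_range_succ,
    Finset.sum_range_succ']
  have he : c d * eC q d d = 0 := by
    rw [eC, Nat.sub_self]; norm_num [qint_zero]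
  have hf : c 0 * fC q d 0 = 0 := by
    rw [fC]; norm_num [qint_zero]
  rw [he, hf, zero_smul, zero_smul, add_zero, add_zero, ← Finset.sum_sub_distrib]
  exact Finset.sum_congr rfl fun b _ => (sub_smul _ _ _).symm

lemma FDel_sum (q : ℂ) (d : ℕ) (c : ℕ → ℂ) :
    FDel q (∑ b ∈ Finset.range (d+1), c b • monomial (tri (d-b) b (2*b+1)) 1) =
      ∑ b ∈ Finset.range d,
        (c b * eC q d b - c (b+1) * gC q d (b+1)) • monomial (tri (d-(b+1)) (b+1) (2*b+1)) 1 := by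
  rw [map_sum]
  have hterm : ∀ b ∈ Finset.range (d+1), FDel q (c b • monomial (tri (d-b) b (2*b+1)) 1) =
      (c b * eC q d b) • monomial (tri (d-(b+1)) (b+1) (2*b+1)) (1:ℂ)
      - (c b * gC q d b) • monomial (tri (d-b) b (2*b-1)) (1:ℂ) := by
    intro b _
    rw [map_smul, FDel_term, smul_sub, smul_smul, smul_smul]
  rw [Finset.sum_congr rfl hterm, Finset.sum_sub_distrib, Finset.sum_range_succ,
    Finset.sum_range_succ']
  have he : c d * eC q d d = 0 := by
    rw [eC, Nat.sub_self]; norm_num [qint_zero]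
  have hf : c 0 * gC q d 0 = 0 := by
    rw [gC]; norm_num [qint_zero]
  rw [he, hf, zero_smul, zero_smul, add_zero, add_zero, ← Finset.sum_sub_distrib]
  exact Finset.sum_congr rfl fun b _ => (sub_smul _ _ _).symm

variable {q : ℂ} (hq : q ≠ 0) (hroot : ∀ n : ℕ, 0 < n → q ^ n ≠ 1)

include hq hroot in
lemma gC_eq_fC (d b : ℕ) : gC q d b = fC q d b := by
  have h2 : qint q 2 ≠ 0 := qint_ne_zero hq hroot (by norm_num)
  have htm := qint_two_mul hq hroot b
  rw [gC, fC, show ((2*b+1-1 : ℕ) : ℤ) = 2 * (b:ℤ) by omega, htm,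
    show (1:ℤ) * (2 * (b:ℤ)) = 2 * (b:ℤ) by ring]
  linear_combination (qint q ((2*b+1 : ℕ)) * qint (q^2) (b:ℕ) * q ^ ((2:ℤ)*(b:ℤ)) *
    q ^ ((-2:ℤ)*((d-b : ℕ):ℤ))) * (inv_mul_cancel₀ h2)

include hq hroot in
lemma lam_zero (d : ℕ) : lam q d 0 = 1 := by
  have hq2 : (q^2:ℂ) ≠ 0 := pow_ne_zero 2 hq
  have hroot2 : ∀ n : ℕ, 0 < n → (q^2)^n ≠ 1 := fun n hn h =>
    hroot (2*n) (by omega) (by rwa [← pow_mul] at h)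
  have hof : qoddfact q 0 = 1 := by
    rw [qoddfact]
    rw [Finset.prod_range_one]
    rw [show (2 * (0:ℕ) + 1 : ℤ) = 1 by norm_num, qint, zpow_one, zpow_neg, zpow_one]
    exact div_self (qsub_ne hq hroot)
  have hf0 : qfact (q^2) 0 = 1 := by rw [qfact, Finset.prod_range_zero]
  rw [lam, qbinom, hf0, hof, Nat.sub_zero, one_mul,
    show (2 * ((0:ℕ):ℤ) * ((d:ℤ) - ((0:ℕ):ℤ) - 1)) = 0 by push_cast; ring, zpow_zero,
    div_self (qfact_ne_zero hq2 hroot2 d), one_mul, div_one]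

include hq hroot in
lemma fC_ne (d b : ℕ) : fC q d (b+1) ≠ 0 := by
  rw [fC]
  apply mul_ne_zero
  apply mul_ne_zero
  apply mul_ne_zero
  · exact qint_ne_zero hq hroot (by omega)
  · have hq2 : (q^2:ℂ) ≠ 0 := pow_ne_zero 2 hq
    have hroot2 : ∀ n : ℕ, 0 < n → (q^2)^n ≠ 1 := fun n hn h =>
      hroot (2*n) (by omega) (by rwa [← pow_mul] at h)
    exact qint_ne_zero hq2 hroot2 (by omega)
  · exact zpow_ne_zero _ hq
  · exact zpow_ne_zero _ hq

include hq hroot in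
lemma lam_rec (d b : ℕ) (hbd : b < d) :
    lam q d b * eC q d b = lam q d (b+1) * fC q d (b+1) := by
  have hq2 : (q^2:ℂ) ≠ 0 := pow_ne_zero 2 hq
  have hroot2 : ∀ n : ℕ, 0 < n → (q^2)^n ≠ 1 := fun n hn h =>
    hroot (2*n) (by omega) (by rwa [← pow_mul] at h)
  have hodd : qoddfact q b ≠ 0 := qoddfact_ne_zero hq hroot b
  have h3 : qint q (2*(b:ℤ)+3) ≠ 0 := qint_ne_zero hq hroot (by omega)
  have hbr := qbinom_rec hq2 hroot2 d b hbd
  have hzp : q ^ (2 * (((b+1:ℕ)):ℤ) * ((d:ℤ) - (((b+1:ℕ)):ℤ) - 1)) *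
      (q ^ ((1:ℤ) * (((2*(b+1)+1-1 : ℕ)):ℤ)) * q ^ ((-2:ℤ) * (((d-(b+1) : ℕ)):ℤ))) =
      q ^ (2 * (b:ℤ) * ((d:ℤ) - (b:ℤ) - 1)) := by
    rw [show ((1:ℤ) * (((2*(b+1)+1-1 : ℕ)):ℤ)) = 2*(b:ℤ)+2 by omega,
      show (((d-(b+1) : ℕ)):ℤ) = (d:ℤ)-(b:ℤ)-1 by omega,
      show (((b+1:ℕ)):ℤ) = (b:ℤ)+1 by omega,
      ← zpow_add₀ hq, ← zpow_add₀ hq]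
    congr 1
    ring
  rw [lam, lam, eC, fC, qoddfact_succ]
  calc qbinom (q^2) d b * q ^ (2 * (b:ℤ) * ((d:ℤ) - (b:ℤ) - 1)) / qoddfact q b *
        qint (q^2) ((d - b : ℕ))
      = (qbinom (q^2) d b * qint (q^2) ((d - b : ℕ))) *
          q ^ (2 * (b:ℤ) * ((d:ℤ) - (b:ℤ) - 1)) / qoddfact q b := by ring
    _ = (qbinom (q^2) d (b+1) * qint (q^2) ((b+1 : ℕ))) *
          q ^ (2 * (b:ℤ) * ((d:ℤ) - (b:ℤ) - 1)) / qoddfact q b := by rw [hbr]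
    _ = _ := by
        rw [← hzp, show ((2*(b+1)+1 : ℕ) : ℤ) = 2*(b:ℤ)+3 by omega]
        linear_combination (-(qbinom (q^2) d (b+1) * qint (q^2) ((b+1 : ℕ)) *
          q ^ (2*((b+1:ℕ):ℤ)*((d:ℤ)-((b+1:ℕ):ℤ)-1)) *
          q ^ ((1:ℤ)*((2*(b+1)+1-1 : ℕ):ℤ)) * q ^ ((-2:ℤ)*((d-(b+1) : ℕ):ℤ)) *
          (qoddfact q b)⁻¹)) * (mul_inv_cancel₀ h3)

include hq hroot in
lemma c_eq_lam (d : ℕ) (c : ℕ → ℂ)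
    (hrec : ∀ b, b < d → c b * eC q d b = c (b+1) * fC q d (b+1)) :
    ∀ b, b ≤ d → c b = c 0 * lam q d b := by
  intro b
  induction b with
  | zero => intro _; rw [lam_zero hq hroot, mul_one]
  | succ b ih =>
    intro hbd
    have hb : b < d := by omega
    have key : c (b+1) * fC q d (b+1) = (c 0 * lam q d (b+1)) * fC q d (b+1) := by
      rw [← hrec b hb, ih (by omega), mul_assoc, lam_rec hq hroot d b hb]
      ring
    exact mul_right_cancel₀ (fC_ne hq hroot d b) key

lemma coeff_extract (d : ℕ) (w : ℕ → ℂ) (X Z : ℕ → ℕ)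
    (h : ∑ b ∈ Finset.range d, w b • monomial (tri (X b) b (Z b)) (1:ℂ) = 0) :
    ∀ b, b < d → w b = 0 := by
  intro b hb
  have hc := congrArg (coeff (tri (X b) b (Z b))) h
  rw [MvPolynomial.coeff_sum, MvPolynomial.coeff_zero] at hc
  rw [Finset.sum_eq_single b] at hc
  · simpa [coeff_smul, coeff_monomial] using hc
  · intro b' _ hb'
    rw [coeff_smul, coeff_monomial, if_neg (fun hh => hb' (tri_inj hh).2.1), smul_zero]
  · intro hmem
    exact absurd (Finset.mem_range.2 hb) hmem

end Coeffs

section Final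

lemma tri_single (d : ℕ) : tri 0 d 0 = Finsupp.single 1 d := by
  ext i; fin_cases i <;> simp [tri, Finsupp.single_apply]

lemma pPlus_tri (d : ℕ) : pPlus d = monomial (tri 0 d 0) 1 := by rw [pPlus, tri_single]

lemma pMinus_eq (q : ℂ) (d : ℕ) :
    pMinus q d = ∑ b ∈ Finset.range (d+1), lam q d b • monomial (tri (d-b) b (2*b+1)) 1 := rfl

variable {q : ℂ} (hq : q ≠ 0) (hroot : ∀ n : ℕ, 0 < n → q ^ n ≠ 1)

include hq hroot in
lemma pPlus_ker (d : ℕ) : Fop q (pPlus d) = 0 := by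
  rw [pPlus_tri, Fop_tri]
  simp [qint_zero]

lemma pPlus_PSd (d : ℕ) : pPlus d ∈ PSd d := by
  apply Submodule.subset_span
  exact ⟨Finsupp.single 1 d, by simp [Finsupp.single_apply], rfl⟩

include hq in
lemma pPlus_eig (d : ℕ) : KDel q (pPlus d) = (q ^ (1 - 2*(d:ℤ))) • pPlus d := by
  rw [pPlus_tri, KDel_tri q hq,
    show (1 + 2*((0:ℕ):ℤ) - 2*((d:ℕ):ℤ) + 2*((0:ℕ):ℤ)) = 1 - 2*(d:ℤ) by push_cast; ring]

include hq hroot in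
lemma pMinus_ker (d : ℕ) : Fop q (pMinus q d) = 0 := by
  rw [pMinus_eq, Fop_sum]
  apply Finset.sum_eq_zero
  intro b hb
  rw [sub_eq_zero.2 (lam_rec hq hroot d b (Finset.mem_range.1 hb)), zero_smul]

lemma pMinus_PSd (d : ℕ) : pMinus q d ∈ PSd d := by
  rw [pMinus_eq]
  apply Submodule.sum_mem
  intro b hb
  apply Submodule.smul_mem
  apply Submodule.subset_span
  refine ⟨tri (d-b) b (2*b+1), ?_, rfl⟩
  rw [tri0, tri1]
  have := Finset.mem_range.1 hb
  omega

include hq in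
lemma pMinus_eig (d : ℕ) : KDel q (pMinus q d) = (q ^ (3 + 2*d)) • pMinus q d := by
  rw [pMinus_eq, map_sum, Finset.smul_sum]
  apply Finset.sum_congr rfl
  intro b hb
  rw [map_smul, KDel_tri q hq, smul_smul, smul_smul,
    show (1 + 2*(((d-b:ℕ)):ℤ) - 2*((b:ℕ):ℤ) + 2*(((2*b+1:ℕ)):ℤ)) = ((3+2*d : ℕ):ℤ) by
      have := Finset.mem_range.1 hb; omega,
    zpow_natCast, mul_comm]

include hq hroot in
lemma pPlus_FDel (d : ℕ) : FDel q (pPlus d) = 0 := by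
  rw [pPlus_tri, FDel_tri]
  simp [qint_zero]

include hq hroot in
lemma pMinus_FDel (d : ℕ) : FDel q (pMinus q d) = 0 := by
  rw [pMinus_eq, FDel_sum]
  apply Finset.sum_eq_zero
  intro b hb
  rw [gC_eq_fC hq hroot,
    sub_eq_zero.2 (lam_rec hq hroot d b (Finset.mem_range.1 hb)), zero_smul]

end Final

theorem stmt_11 (q : ℂ) (hq : q ≠ 0) (hroot : ∀ n : ℕ, 0 < n → q ^ n ≠ 1) (d : ℕ) :
    (LinearMap.ker (Fop q) ⊓ (PSd d ⊓ Module.End.eigenspace (KDel q) (q ^ (1 - 2 * (d : ℤ))))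
      = Submodule.span ℂ {pPlus d}) ∧
    (LinearMap.ker (Fop q) ⊓ (PSd d ⊓ Module.End.eigenspace (KDel q) (q ^ (3 + 2 * d)))
      = Submodule.span ℂ {pMinus q d}) ∧
    FDel q (pPlus d) = 0 ∧ FDel q (pMinus q d) = 0 := by
  refine ⟨?_, ?_, pPlus_FDel hq hroot d, pMinus_FDel hq hroot d⟩
  · apply le_antisymm
    · intro p hp
      rw [Submodule.mem_inf, Submodule.mem_inf] at hp
      obtain ⟨hker, hPS, heig⟩ := hp
      rw [Module.End.mem_eigenspace_iff] at heig
      have hsupp : ∀ α ∈ p.support, α = Finsupp.single 1 d := by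
        intro α hα
        have h1 := PSd_le d hPS α hα
        have h2 := eig_weight q hq hroot heig hα
        simp only at h1
        have e0 : α 0 = 0 := by omega
        have e1 : α 1 = d := by omega
        have e2 : α 2 = 0 := by omega
        rw [eq_tri α, e0, e1, e2, tri_single]
      rw [single_support p _ hsupp]
      exact Submodule.smul_mem _ _ (Submodule.mem_span_singleton_self (pPlus d))
    · rw [Submodule.span_le, Set.singleton_subset_iff]
      refine Submodule.mem_inf.2 ⟨LinearMap.mem_ker.2 (pPlus_ker hq hroot d),
        Submodule.mem_inf.2 ⟨pPlus_PSd d, ?_⟩⟩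
      rw [Module.End.mem_eigenspace_iff]
      exact pPlus_eig hq d
  · apply le_antisymm
    · intro p hp
      rw [Submodule.mem_inf, Submodule.mem_inf] at hp
      obtain ⟨hker, hPS, heig⟩ := hp
      rw [Module.End.mem_eigenspace_iff, ← zpow_natCast q (3 + 2*d)] at heig
      have hsupp : ∀ α ∈ p.support, ∃ b, b ≤ d ∧ α = tri (d - b) b (2*b+1) := by
        intro α hα
        have h1 := PSd_le d hPS α hα
        have h2 := eig_weight q hq hroot heig hα
        simp only at h1
        refine ⟨α 1, by omega, ?_⟩
        have e0 : α 0 = d - α 1 := by omega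
        have e2 : α 2 = 2 * α 1 + 1 := by omega
        conv_lhs => rw [eq_tri α]
        rw [e0, e2]
      have hdec := tri_decomp p d hsupp
      obtain ⟨c, hc⟩ : ∃ c : ℕ → ℂ, ∀ b, c b = coeff (tri (d-b) b (2*b+1)) p :=
        ⟨_, fun b => rfl⟩
      have hdec' : p = ∑ b ∈ Finset.range (d+1), c b • monomial (tri (d-b) b (2*b+1)) 1 := by
        rw [hdec]
        exact Finset.sum_congr rfl fun b _ => by rw [hc b]
      have h0 : Fop q p = 0 := LinearMap.mem_ker.1 hker
      rw [hdec', Fop_sum] at h0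
      have hw := coeff_extract d (fun b => c b * eC q d b - c (b+1) * fC q d (b+1))
        (fun b => d - (b+1)) (fun b => 2*b+2) h0
      have hrec : ∀ b, b < d → c b * eC q d b = c (b+1) * fC q d (b+1) :=
        fun b hb => sub_eq_zero.1 (hw b hb)
      have hcl := c_eq_lam hq hroot d c hrec
      have hfin : p = c 0 • pMinus q d := by
        rw [hdec', pMinus_eq, Finset.smul_sum]
        apply Finset.sum_congr rfl
        intro b hb
        rw [hcl b (by have := Finset.mem_range.1 hb; omega), smul_smul]
      rw [hfin]
      exact Submodule.smul_mem _ _ (Submodule.mem_span_singleton_self (pMinus q d))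
    · rw [Submodule.span_le, Set.singleton_subset_iff]
      refine Submodule.mem_inf.2 ⟨LinearMap.mem_ker.2 (pMinus_ker hq hroot d),
        Submodule.mem_inf.2 ⟨pMinus_PSd d, ?_⟩⟩
      rw [Module.End.mem_eigenspace_iff]
      exact pMinus_eig hq d
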